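/- arXiv:2401.12044 — 4 statements merged into one kernel-verified Lean document; each statement's English description precedes it below -/
import Mathlib

section
/- Let T > 0, let X, K : [0,T] → ℝ be continuous nonnegative functions, let ω : [0,∞) → [0,∞) be a continuous nondecreasing function with ω(s) > 0 for every s > 0, and let k > 0. Assume that X(t) ≤ k + ∫₀ᵗ K(s) ω(X(s)) ds for every t ∈ [0,T]. Then for every t ∈ [0,T] and every y* > 0 satisfying ∫_k^{y*} ds/ω(s) = ∫₀ᵗ K(s) ds, one has X(t) ≤ y*. -/
open MeasureTheory Set

/-- **Bihari–LaSalle inequality.** If `X t ≤ k + ∫₀ᵗ K s * ω (X s) ds` on `[0,T]`, with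
`X, K` continuous nonnegative, `ω` continuous nondecreasing nonnegative on `[0,∞)` and
positive on `(0,∞)`, and `k > 0`, then for any `t ∈ [0,T]` and any `y* > 0` with
`∫_k^{y*} ds/ω(s) = ∫₀ᵗ K(s) ds` one has `X t ≤ y*`. -/
theorem bihari_lasalle
    (T : ℝ) (hT : 0 < T)
    (X K ω : ℝ → ℝ) (k : ℝ) (hk : 0 < k)
    (hXc : ContinuousOn X (Icc 0 T)) (hKc : ContinuousOn K (Icc 0 T))
    (hXnn : ∀ t ∈ Icc (0:ℝ) T, 0 ≤ X t) (hKnn : ∀ t ∈ Icc (0:ℝ) T, 0 ≤ K t)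
    (hωc : ContinuousOn ω (Ici 0))
    (hωnn : ∀ s, 0 ≤ s → 0 ≤ ω s)
    (hωpos : ∀ s, 0 < s → 0 < ω s)
    (hωmono : ∀ s₁ s₂, 0 ≤ s₁ → s₁ ≤ s₂ → ω s₁ ≤ ω s₂)
    (hineq : ∀ t ∈ Icc (0:ℝ) T, X t ≤ k + ∫ s in (0:ℝ)..t, K s * ω (X s)) :
    ∀ t ∈ Icc (0:ℝ) T, ∀ ystar : ℝ, 0 < ystar →
      (∫ s in k..ystar, 1 / ω s) = (∫ s in (0:ℝ)..t, K s) →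
      X t ≤ ystar := by
  intro t ht ystar hy hGy
  set g : ℝ → ℝ := fun s => 1 / ω s with hg
  set f : ℝ → ℝ := fun s => K s * ω (X s) with hf
  set Y : ℝ → ℝ := fun u => k + ∫ s in (0:ℝ)..u, f s with hYdef
  set G : ℝ → ℝ := fun y => ∫ s in k..y, g s with hGdef
  have hTuIcc : uIcc (0:ℝ) T = Icc 0 T := uIcc_of_le (le_of_lt hT)
  -- continuity of f on Icc 0 T
  have hfc : ContinuousOn f (Icc 0 T) :=
    hKc.mul (hωc.comp hXc (fun u hu => hXnn u hu))
  have hfnn : ∀ u ∈ Icc (0:ℝ) T, 0 ≤ f u := fun u hu =>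
    mul_nonneg (hKnn u hu) (hωnn _ (hXnn u hu))
  have hfintT : IntervalIntegrable f volume 0 T :=
    (hfc.mono (by rw [hTuIcc])).intervalIntegrable
  have hKintT : IntervalIntegrable K volume 0 T :=
    (hKc.mono (by rw [hTuIcc])).intervalIntegrable
  -- g is continuous at positive points
  have hgc : ∀ y : ℝ, 0 < y → ContinuousAt g y := by
    intro y hy'
    have hωat : ContinuousAt ω y :=
      (hωc y (le_of_lt hy')).continuousAt (Ici_mem_nhds hy')
    exact continuousAt_const.div hωat (ne_of_gt (hωpos y hy'))
  have hgcOn : ContinuousOn g (Ioi 0) := fun y hy' => (hgc y hy').continuousWithinAt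
  -- g is interval integrable between positive points
  have hgint : ∀ a b : ℝ, 0 < a → 0 < b → IntervalIntegrable g volume a b := by
    intro a b ha hb
    apply (hgcOn.mono ?_).intervalIntegrable
    intro x hx
    exact lt_of_lt_of_le (lt_min ha hb) (hx.1 : min a b ≤ x)
  -- derivative of G at positive points
  have hGderiv : ∀ y : ℝ, 0 < y → HasDerivAt G (g y) y := by
    intro y hy'
    exact intervalIntegral.integral_hasDerivAt_right (hgint k y hk hy')
      (ContinuousOn.stronglyMeasurableAtFilter isOpen_Ioi hgcOn y hy') (hgc y hy')
  -- Y ≥ k on [0,T]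
  have hYge : ∀ u ∈ Icc (0:ℝ) T, k ≤ Y u := by
    intro u hu
    have h0 : 0 ≤ ∫ s in (0:ℝ)..u, f s := by
      apply intervalIntegral.integral_nonneg hu.1
      intro s hs
      exact hfnn s ⟨hs.1, le_trans hs.2 hu.2⟩
    simp only [hYdef]
    linarith
  have hYpos : ∀ u ∈ Icc (0:ℝ) T, 0 < Y u := fun u hu => lt_of_lt_of_le hk (hYge u hu)
  have hXleY : ∀ u ∈ Icc (0:ℝ) T, X u ≤ Y u := fun u hu => hineq u hu
  -- continuity of Y on [0,T]
  have hYc : ContinuousOn Y (Icc 0 T) := by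
    apply continuousOn_const.add
    have := intervalIntegral.continuousOn_primitive_interval'
      (f := f) (μ := volume) (b₁ := 0) (b₂ := T) (a := 0) hfintT
      (by rw [hTuIcc]; exact ⟨le_rfl, le_of_lt hT⟩)
    rwa [hTuIcc] at this
  have hIKc : ContinuousOn (fun u => ∫ s in (0:ℝ)..u, K s) (Icc 0 T) := by
    have := intervalIntegral.continuousOn_primitive_interval'
      (f := K) (μ := volume) (b₁ := 0) (b₂ := T) (a := 0) hKintT
      (by rw [hTuIcc]; exact ⟨le_rfl, le_of_lt hT⟩)
    rwa [hTuIcc] at this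
  -- continuity of G∘Y
  have hGcont : ContinuousOn G (Ioi 0) := fun y hy' =>
    ((hGderiv y hy').continuousAt).continuousWithinAt
  set F : ℝ → ℝ := fun u => G (Y u) - ∫ s in (0:ℝ)..u, K s with hFdef
  have hFc : ContinuousOn F (Icc 0 T) :=
    (hGcont.comp hYc (fun u hu => hYpos u hu)).sub hIKc
  -- derivative of F on the interior
  have hFderiv : ∀ u ∈ Ioo (0:ℝ) T, HasDerivAt F (g (Y u) * f u - K u) u := by
    intro u hu
    have huIcc : u ∈ Icc (0:ℝ) T := Ioo_subset_Icc_self hu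
    have hIccnhds : Icc (0:ℝ) T ∈ nhds u := Icc_mem_nhds hu.1 hu.2
    have hfat : ContinuousAt f u := hfc.continuousAt hIccnhds
    have hKat : ContinuousAt K u := hKc.continuousAt hIccnhds
    have hfintu : IntervalIntegrable f volume 0 u :=
      hfintT.mono_set (by rw [hTuIcc, uIcc_of_le huIcc.1]; exact Icc_subset_Icc le_rfl huIcc.2)
    have hKintu : IntervalIntegrable K volume 0 u :=
      hKintT.mono_set (by rw [hTuIcc, uIcc_of_le huIcc.1]; exact Icc_subset_Icc le_rfl huIcc.2)
    have hfmeas : StronglyMeasurableAtFilter f (nhds u) volume :=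
      ContinuousOn.stronglyMeasurableAtFilter isOpen_Ioo (hfc.mono Ioo_subset_Icc_self) u hu
    have hKmeas : StronglyMeasurableAtFilter K (nhds u) volume :=
      ContinuousOn.stronglyMeasurableAtFilter isOpen_Ioo (hKc.mono Ioo_subset_Icc_self) u hu
    have hYd : HasDerivAt Y (f u) u := by
      have := intervalIntegral.integral_hasDerivAt_right hfintu hfmeas hfat
      simpa [hYdef] using (this.const_add k)
    have hGYd : HasDerivAt (fun v => G (Y v)) (g (Y u) * f u) u :=
      (hGderiv (Y u) (hYpos u huIcc)).comp u hYd
    have hIKd : HasDerivAt (fun v => ∫ s in (0:ℝ)..v, K s) (K u) u :=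
      intervalIntegral.integral_hasDerivAt_right hKintu hKmeas hKat
    exact hGYd.sub hIKd
  -- the derivative is nonpositive
  have hderivnp : ∀ u ∈ Ioo (0:ℝ) T, g (Y u) * f u - K u ≤ 0 := by
    intro u hu
    have huIcc : u ∈ Icc (0:ℝ) T := Ioo_subset_Icc_self hu
    have hωY : 0 < ω (Y u) := hωpos _ (hYpos u huIcc)
    have hωXY : ω (X u) ≤ ω (Y u) := hωmono _ _ (hXnn u huIcc) (hXleY u huIcc)
    have h1 : ω (X u) / ω (Y u) ≤ 1 := (div_le_one hωY).mpr hωXY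
    have h2 : (1 / ω (Y u)) * (K u * ω (X u)) ≤ K u := by
      calc (1 / ω (Y u)) * (K u * ω (X u)) = K u * (ω (X u) / ω (Y u)) := by ring
        _ ≤ K u * 1 := mul_le_mul_of_nonneg_left h1 (hKnn u huIcc)
        _ = K u := mul_one _
    have h3 : g (Y u) * f u ≤ K u := by simpa [hg, hf] using h2
    linarith
  -- F is antitone on [0,T]
  have hFanti : AntitoneOn F (Icc 0 T) := by
    apply antitoneOn_of_deriv_nonpos (convex_Icc 0 T) hFc
    · intro u hu
      rw [interior_Icc] at hu
      exact ((hFderiv u hu).differentiableAt).differentiableWithinAt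
    · intro u hu
      rw [interior_Icc] at hu
      rw [(hFderiv u hu).deriv]
      exact hderivnp u hu
  -- F t ≤ F 0 = 0
  have hF0 : F 0 = 0 := by
    simp [hFdef, hYdef, hGdef]
  have hFt : F t ≤ 0 := by
    rw [← hF0]
    exact hFanti ⟨le_rfl, le_of_lt hT⟩ ht ht.1
  -- hence G (Y t) ≤ G ystar
  have hGYt : G (Y t) ≤ G ystar := by
    have : G ystar = ∫ s in (0:ℝ)..t, K s := hGy
    rw [this]
    have := sub_nonpos.mp hFt
    linarith [this]
  -- conclude by contradiction
  by_contra hcon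
  push_neg at hcon
  have hyYt : ystar < Y t := lt_of_lt_of_le hcon (hXleY t ht)
  have hpos : 0 < ∫ s in ystar..(Y t), g s := by
    apply intervalIntegral.intervalIntegral_pos_of_pos_on (hgint ystar (Y t) hy (hYpos t ht))
    · intro x hx
      rw [hg]
      exact one_div_pos.mpr (hωpos x (lt_trans hy hx.1))
    · exact hyYt
  have hsplit : G ystar + ∫ s in ystar..(Y t), g s = G (Y t) := by
    rw [hGdef]
    exact intervalIntegral.integral_add_adjacent_intervals (hgint k ystar hk hy)
      (hgint ystar (Y t) hy (hYpos t ht))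
  linarith
end

section
/- Let T > 0, q > 1, γ > 0, k > 0, and let X, K : [0,T] → ℝ be continuous nonnegative functions satisfying X(t) ≤ k + ∫₀ᵗ K(s) ( X(s) + γ X(s)^{(q+1)/2} ) ds for all t ∈ [0,T]. If exp( ((q−1)/2) ∫₀ᵀ K(s) ds ) < 1 + k^{(1−q)/2}/γ, then for every t ∈ [0,T] one has X(t) ≤ ( (γ + k^{(1−q)/2}) · exp( −((q−1)/2) ∫₀ᵗ K(s) ds ) − γ )^{−2/(q−1)}. -/
open MeasureTheory Set

/-- Nonlinear Grönwall-type bound obtained from the Bihari–LaSalle inequality with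
`ω(s) = s + γ s^((q+1)/2)`. If `X t ≤ k + ∫₀ᵗ K s (X s + γ X s^((q+1)/2)) ds` on `[0,T]`
and `exp(((q−1)/2) ∫₀ᵀ K) < 1 + k^((1−q)/2)/γ`, then
`X t ≤ ((γ + k^((1−q)/2)) exp(−((q−1)/2) ∫₀ᵗ K) − γ)^(−2/(q−1))` for all `t ∈ [0,T]`. -/
theorem nonlinear_gronwall
    (T q γ k : ℝ) (hT : 0 < T) (hq : 1 < q) (hγ : 0 < γ) (hk : 0 < k)
    (X K : ℝ → ℝ)
    (hXc : ContinuousOn X (Icc 0 T)) (hKc : ContinuousOn K (Icc 0 T))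
    (hXnn : ∀ t ∈ Icc (0:ℝ) T, 0 ≤ X t) (hKnn : ∀ t ∈ Icc (0:ℝ) T, 0 ≤ K t)
    (hineq : ∀ t ∈ Icc (0:ℝ) T,
      X t ≤ k + ∫ s in (0:ℝ)..t, K s * (X s + γ * X s ^ ((q + 1) / 2)))
    (hsmall : Real.exp (((q - 1) / 2) * ∫ s in (0:ℝ)..T, K s) < 1 + k ^ ((1 - q) / 2) / γ) :
    ∀ t ∈ Icc (0:ℝ) T,
      X t ≤ ((γ + k ^ ((1 - q) / 2)) *
          Real.exp (-((q - 1) / 2) * ∫ s in (0:ℝ)..t, K s) - γ) ^ (-2 / (q - 1)) := by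
  set r : ℝ := (q - 1) / 2 with hrdef
  have hr : 0 < r := by unfold r; linarith
  set e : ℝ := (q + 1) / 2 with hedef
  have he : 0 < e := by unfold e; linarith
  have hkr : k ^ ((1 - q) / 2) = k ^ (-r) := by norm_num [hrdef]; ring_nf
  set h : ℝ → ℝ := fun s => K s * (X s + γ * X s ^ e) with hhdef
  have hrpow : Continuous fun x : ℝ => x ^ e :=
    continuous_iff_continuousAt.2 fun x => Real.continuousAt_rpow_const x _ (Or.inr he.le)
  have hhc : ContinuousOn h (Icc 0 T) :=
    hKc.mul (hXc.add (continuousOn_const.mul (hrpow.comp_continuousOn hXc)))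
  have hhnn : ∀ s ∈ Icc (0:ℝ) T, 0 ≤ h s := fun s hs =>
    mul_nonneg (hKnn s hs)
      (add_nonneg (hXnn s hs) (mul_nonneg hγ.le (Real.rpow_nonneg (hXnn s hs) _)))
  set Y : ℝ → ℝ := fun t => k + ∫ s in (0:ℝ)..t, h s with hYdef
  set J : ℝ → ℝ := fun t => ∫ s in (0:ℝ)..t, K s with hJdef
  have hsub : ∀ t ∈ Icc (0:ℝ) T, uIcc (0:ℝ) t ⊆ Icc 0 T := fun t ht => by
    rw [uIcc_of_le ht.1]; exact Icc_subset_Icc le_rfl ht.2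
  have hhint : ∀ t ∈ Icc (0:ℝ) T, IntervalIntegrable h volume 0 t := fun t ht =>
    (hhc.mono (hsub t ht)).intervalIntegrable
  have hKint : ∀ t ∈ Icc (0:ℝ) T, IntervalIntegrable K volume 0 t := fun t ht =>
    (hKc.mono (hsub t ht)).intervalIntegrable
  have hYk : ∀ t ∈ Icc (0:ℝ) T, k ≤ Y t := fun t ht => by
    have h0 : (0:ℝ) ≤ ∫ s in (0:ℝ)..t, h s :=
      intervalIntegral.integral_nonneg ht.1
        (fun s hs => hhnn s (Icc_subset_Icc le_rfl ht.2 hs))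
    simp only [hYdef]; linarith
  have hY0 : ∀ t ∈ Icc (0:ℝ) T, 0 < Y t := fun t ht => lt_of_lt_of_le hk (hYk t ht)
  have hXY : ∀ t ∈ Icc (0:ℝ) T, X t ≤ Y t := fun t ht => hineq t ht
  -- continuity of Y and J on Icc 0 T
  have hIccU : uIcc (0:ℝ) T = Icc 0 T := uIcc_of_le hT.le
  have hYc : ContinuousOn Y (Icc 0 T) := by
    have := intervalIntegral.continuousOn_primitive_interval
      (f := h) (a := (0:ℝ)) (b := T) (μ := volume) (by rw [hIccU]; exact hhc.integrableOn_Icc)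
    rw [hIccU] at this
    exact continuousOn_const.add this
  have hJc : ContinuousOn J (Icc 0 T) := by
    have := intervalIntegral.continuousOn_primitive_interval
      (f := K) (a := (0:ℝ)) (b := T) (μ := volume) (by rw [hIccU]; exact hKc.integrableOn_Icc)
    rw [hIccU] at this
    exact this
  set F : ℝ → ℝ := fun t => Real.log (γ + Y t ^ (-r)) + r * J t with hFdef
  have hγY : ∀ t ∈ Icc (0:ℝ) T, 0 < γ + Y t ^ (-r) := fun t ht =>
    add_pos hγ (Real.rpow_pos_of_pos (hY0 t ht) _)
  have hFc : ContinuousOn F (Icc 0 T) := by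
    refine ContinuousOn.add (ContinuousOn.log ?_ (fun t ht => (hγY t ht).ne')) 
      (continuousOn_const.mul hJc)
    exact continuousOn_const.add (hYc.rpow_const (fun t ht => Or.inl (hY0 t ht).ne'))
  -- derivative of F on the interior
  have hderiv : ∀ t ∈ Ioo (0:ℝ) T, HasDerivAt F
      ((-r) * Y t ^ (-r - 1) * h t / (γ + Y t ^ (-r)) + r * K t) t := by
    intro t ht
    have htmem : t ∈ Icc (0:ℝ) T := Ioo_subset_Icc_self ht
    have hnhds : Icc (0:ℝ) T ∈ nhds t := Icc_mem_nhds ht.1 ht.2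
    have hI : HasDerivAt (fun u => ∫ s in (0:ℝ)..u, h s) (h t) t :=
      intervalIntegral.integral_hasDerivAt_right (hhint t htmem)
        ((hhc.mono Ioo_subset_Icc_self).stronglyMeasurableAtFilter isOpen_Ioo t ht)
        (hhc.continuousAt hnhds)
    have hY' : HasDerivAt Y (h t) t := hI.const_add k
    have hpow : HasDerivAt (fun u => Y u ^ (-r))
        ((-r) * Y t ^ (-r - 1) * h t) t := by
      have := hY'.rpow_const (p := -r) (Or.inl (hY0 t htmem).ne')
      convert this using 1
      ring
    have hlog : HasDerivAt (fun u => Real.log (γ + Y u ^ (-r)))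
        (((-r) * Y t ^ (-r - 1) * h t) / (γ + Y t ^ (-r))) t :=
      ((hpow.const_add γ).log (hγY t htmem).ne')
    have hJ' : HasDerivAt J (K t) t :=
      intervalIntegral.integral_hasDerivAt_right (hKint t htmem)
        ((hKc.mono Ioo_subset_Icc_self).stronglyMeasurableAtFilter isOpen_Ioo t ht)
        (hKc.continuousAt hnhds)
    exact hlog.add (hJ'.const_mul r)
  -- nonnegativity of the derivative
  have hdnn : ∀ t ∈ Ioo (0:ℝ) T,
      0 ≤ (-r) * Y t ^ (-r - 1) * h t / (γ + Y t ^ (-r)) + r * K t := by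
    intro t ht
    have htmem : t ∈ Icc (0:ℝ) T := Ioo_subset_Icc_self ht
    have hy : 0 < Y t := hY0 t htmem
    have hc : 0 < γ + Y t ^ (-r) := hγY t htmem
    have hanonneg : 0 ≤ Y t ^ (-r - 1) := (Real.rpow_pos_of_pos hy _).le
    -- h t ≤ K t * (Y t + γ * Y t ^ e)
    have hω : h t ≤ K t * (Y t + γ * Y t ^ e) := by
      refine mul_le_mul_of_nonneg_left ?_ (hKnn t htmem)
      have h1 : X t ≤ Y t := hXY t htmem
      have h2 : X t ^ e ≤ Y t ^ e := Real.rpow_le_rpow (hXnn t htmem) h1 he.le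
      nlinarith [hγ.le]
    -- key algebraic identity
    have hid : Y t ^ (-r - 1) * (Y t + γ * Y t ^ e) = Y t ^ (-r) + γ := by
      have e1 : Y t ^ (-r - 1) * Y t = Y t ^ (-r) := by
        rw [← Real.rpow_add_one hy.ne']
        norm_num
      have e2 : Y t ^ (-r - 1) * Y t ^ e = 1 := by
        rw [← Real.rpow_add hy]
        have : -r - 1 + e = 0 := by unfold r e; ring
        rw [this, Real.rpow_zero]
      calc Y t ^ (-r - 1) * (Y t + γ * Y t ^ e)
          = Y t ^ (-r - 1) * Y t + γ * (Y t ^ (-r - 1) * Y t ^ e) := by ring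
        _ = Y t ^ (-r) + γ := by rw [e1, e2, mul_one]
    have hdiv : Y t ^ (-r - 1) * h t / (γ + Y t ^ (-r)) ≤ K t := by
      rw [div_le_iff₀ hc]
      calc Y t ^ (-r - 1) * h t ≤ Y t ^ (-r - 1) * (K t * (Y t + γ * Y t ^ e)) :=
            mul_le_mul_of_nonneg_left hω hanonneg
        _ = K t * (Y t ^ (-r - 1) * (Y t + γ * Y t ^ e)) := by ring
        _ = K t * (γ + Y t ^ (-r)) := by rw [hid]; ring
    have : r * (Y t ^ (-r - 1) * h t / (γ + Y t ^ (-r))) ≤ r * K t :=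
      mul_le_mul_of_nonneg_left hdiv hr.le
    have hrw : (-r) * Y t ^ (-r - 1) * h t / (γ + Y t ^ (-r))
        = -(r * (Y t ^ (-r - 1) * h t / (γ + Y t ^ (-r)))) := by ring
    rw [hrw]; linarith
  -- F is monotone on [0, T]
  have hFmono : MonotoneOn F (Icc 0 T) := by
    refine monotoneOn_of_deriv_nonneg (convex_Icc 0 T) hFc ?_ ?_
    · rw [interior_Icc]
      exact fun t ht => (hderiv t ht).differentiableAt.differentiableWithinAt
    · rw [interior_Icc]
      intro t ht
      rw [(hderiv t ht).deriv]
      exact hdnn t ht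
  have hF0 : F 0 = Real.log (γ + k ^ (-r)) := by
    simp [hFdef, hYdef, hJdef, intervalIntegral.integral_same]
  -- conclude
  intro t ht
  have h0mem : (0:ℝ) ∈ Icc (0:ℝ) T := ⟨le_rfl, hT.le⟩
  have hmono := hFmono h0mem ht ht.1
  rw [hF0] at hmono
  -- exponentiate the monotonicity
  have hkpos : (0:ℝ) < γ + k ^ (-r) := add_pos hγ (Real.rpow_pos_of_pos hk _)
  have hexp : (γ + k ^ (-r)) * Real.exp (-(r * J t)) ≤ γ + Y t ^ (-r) := by
    have h1 : Real.log (γ + k ^ (-r)) - r * J t ≤ Real.log (γ + Y t ^ (-r)) := by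
      simp only [hFdef] at hmono; linarith
    calc (γ + k ^ (-r)) * Real.exp (-(r * J t))
        = Real.exp (Real.log (γ + k ^ (-r)) - r * J t) := by
          rw [Real.exp_sub, Real.exp_log hkpos, Real.exp_neg]; ring
      _ ≤ Real.exp (Real.log (γ + Y t ^ (-r))) := Real.exp_le_exp.2 h1
      _ = γ + Y t ^ (-r) := Real.exp_log (hγY t ht)
  set A : ℝ := (γ + k ^ (-r)) * Real.exp (-(r * J t)) - γ with hAdef
  have hAY : A ≤ Y t ^ (-r) := by simp only [hAdef]; linarith
  -- A > 0 using the smallness hypothesis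
  have hJle : J t ≤ J T := by
    have hint2 : IntervalIntegrable K volume t T :=
      (hKc.mono (by rw [uIcc_of_le ht.2]; exact Icc_subset_Icc ht.1 le_rfl)).intervalIntegrable
    have hsplit : J t + ∫ s in t..T, K s = J T :=
      intervalIntegral.integral_add_adjacent_intervals (hKint t ht) hint2
    have hpos : 0 ≤ ∫ s in t..T, K s :=
      intervalIntegral.integral_nonneg ht.2
        (fun s hs => hKnn s ⟨le_trans ht.1 hs.1, hs.2⟩)
    linarith
  have hApos : 0 < A := by
    have hsm : γ * Real.exp (r * J T) < γ + k ^ (-r) := by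
      rw [hkr] at hsmall
      have := (mul_lt_mul_of_pos_left hsmall hγ)
      rw [mul_add, mul_one, mul_div_cancel₀ _ hγ.ne'] at this
      exact this
    have hexple : Real.exp (r * J t) ≤ Real.exp (r * J T) :=
      Real.exp_le_exp.2 (mul_le_mul_of_nonneg_left hJle hr.le)
    have h2 : γ * Real.exp (r * J t) < γ + k ^ (-r) :=
      lt_of_le_of_lt (mul_le_mul_of_nonneg_left hexple hγ.le) hsm
    have h3 : γ < (γ + k ^ (-r)) * Real.exp (-(r * J t)) := by
      rw [Real.exp_neg, ← div_eq_mul_inv, lt_div_iff₀ (Real.exp_pos _)]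
      linarith
    simp only [hAdef]; linarith
  -- invert: Y t ≤ A ^ (-1/r)
  have hYle : Y t ≤ A ^ (-1 / r) := by
    have h1 : (Y t ^ (-r)) ^ (-1 / r) ≤ A ^ (-1 / r) :=
      Real.rpow_le_rpow_of_nonpos hApos hAY
        (by rw [neg_div]; exact neg_nonpos.2 (div_nonneg zero_le_one hr.le))
    have h2 : (Y t ^ (-r)) ^ (-1 / r) = Y t := by
      rw [← Real.rpow_mul (hY0 t ht).le]
      have : -r * (-1 / r) = 1 := by field_simp
      rw [this, Real.rpow_one]
    linarith [h1, h2.symm.le]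
  -- identify the target expression with A ^ (-1/r)
  have hexprw : ((γ + k ^ ((1 - q) / 2)) *
      Real.exp (-((q - 1) / 2) * ∫ s in (0:ℝ)..t, K s) - γ) ^ (-2 / (q - 1))
      = A ^ (-1 / r) := by
    have her : -2 / (q - 1) = -1 / r := by
      unfold r; rw [div_div_eq_mul_div]; ring_nf
    have harg : -((q - 1) / 2) * ∫ s in (0:ℝ)..t, K s = -(r * J t) := by
      simp only [hJdef, hrdef]; ring
    rw [hkr, harg, hAdef, her]
  rw [hexprw]
  exact le_trans (hXY t ht) hYle
end

section
/- Let T ∈ (0,∞). Let m₁, S : (0,T) → [0,∞) be integrable with S(t) > 0 for almost every t ∈ (0,T), and let m₂ : (0,T) → [0,∞) be square-integrable. Let g : (0,T) → [0,∞) be measurable, and let f : [0,T) → [0,∞) be absolutely continuous, in the sense that there is a locally integrable function f' with f(t) = f(0) + ∫₀ᵗ f'(s) ds for all t ∈ [0,T), with f(0) = 0. Suppose that for almost every t ∈ (0,T): f'(t) + g(t) ≤ m₁(t) f(t) + m₂(t) ( f(t) g(t) log⁺( S(t)/g(t) ) )^{1/2}, where log⁺(x) := max(log x, 0) and the square-root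 term is interpreted as 0 whenever g(t) = 0. Then f(t) = 0 for every t ∈ [0,T). -/
open MeasureTheory Set

private lemma logp_nonneg (x : ℝ) : 0 ≤ max (Real.log x) 0 := le_max_right _ _

private lemma logp_mono {x y : ℝ} (hx : 0 ≤ x) (h : x ≤ y) :
    max (Real.log x) 0 ≤ max (Real.log y) 0 := by
  rcases hx.eq_or_lt with rfl | hx'
  · simp [Real.log_zero]
  · exact max_le_max (Real.log_le_log hx' h) le_rfl

private lemma logp_mul {x y : ℝ} (hx : 0 ≤ x) (hy : 0 ≤ y) :
    max (Real.log (x * y)) 0 ≤ max (Real.log x) 0 + max (Real.log y) 0 := by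
  rcases le_or_gt (x * y) 1 with h | h
  · rw [max_eq_right (Real.log_nonpos (by positivity) h)]
    exact add_nonneg (logp_nonneg x) (logp_nonneg y)
  · have hx0 : x ≠ 0 := by rintro rfl; simp at h; linarith
    have hy0 : y ≠ 0 := by rintro rfl; simp at h; linarith
    refine max_le ?_ (add_nonneg (logp_nonneg x) (logp_nonneg y))
    rw [Real.log_mul hx0 hy0]
    exact add_le_add (le_max_left _ _) (le_max_left _ _)

private lemma mul_logp_div_le {x A : ℝ} (hx : 0 < x) (hA : 0 ≤ A) :
    x * max (Real.log (A / x)) 0 ≤ A := by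
  have h1 : max (Real.log (A / x)) 0 ≤ A / x := by
    rcases hA.eq_or_lt with rfl | hA'
    · simp [Real.log_zero, zero_div]
    · refine max_le ?_ (by positivity)
      have := Real.log_le_sub_one_of_pos (show 0 < A / x by positivity)
      linarith
  calc x * max (Real.log (A / x)) 0 ≤ x * (A / x) :=
        mul_le_mul_of_nonneg_left h1 hx.le
    _ = A := by field_simp

private lemma sqrt_mul_le_add_div_two {a b : ℝ} (ha : 0 ≤ a) (hb : 0 ≤ b) :
    Real.sqrt (a * b) ≤ (a + b) / 2 := by
  have h : a * b ≤ ((a + b) / 2) ^ 2 := by nlinarith [sq_nonneg (a - b)]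
  calc Real.sqrt (a * b) ≤ Real.sqrt (((a + b) / 2) ^ 2) := Real.sqrt_le_sqrt h
    _ = (a + b) / 2 := Real.sqrt_sq (by linarith)

private lemma sqrt_le_self_of_one_le {B : ℝ} (hB : 1 ≤ B) : Real.sqrt B ≤ B := by
  calc Real.sqrt B ≤ Real.sqrt (B ^ 2) := Real.sqrt_le_sqrt (by nlinarith)
    _ = B := Real.sqrt_sq (by linarith)

/-- The key pointwise estimate. -/
private lemma pointwise_bound
    {f g S m₁ m₂ f' ε Λ : ℝ}
    (hf : 0 ≤ f) (hg : 0 ≤ g) (hS : 0 ≤ S) (hm₁ : 0 ≤ m₁) (hm₂ : 0 ≤ m₂)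
    (hε : 0 < ε) (hΛ : Real.log (1 / ε) ≤ Λ) (hΛ0 : 0 ≤ Λ)
    (hle : f' + g ≤ m₁ * f + m₂ * Real.sqrt (f * g * max (Real.log (S / g)) 0)) :
    f' ≤ (m₁ + 2 * m₂ ^ 2 + S + m₂ ^ 2 * Λ) * (f + ε) := by
  set L : ℝ := max (Real.log (S / g)) 0 with hLdef
  set c : ℝ := m₂ ^ 2 * f with hcdef
  have hL0 : 0 ≤ L := le_max_right _ _
  have hc0 : 0 ≤ c := by positivity
  have hF : 0 < f + ε := by linarith
  -- Step 1
  have step1 : m₂ * Real.sqrt (f * g * L) - g ≤ c * (1 + max (Real.log (S / c)) 0) := by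
    rcases hc0.eq_or_lt with hc | hc
    · -- c = 0 : m₂ = 0 or f = 0
      have hc' : m₂ ^ 2 * f = 0 := by rw [← hcdef, ← hc]
      have hz : m₂ * Real.sqrt (f * g * L) = 0 := by
        rcases mul_eq_zero.1 hc' with h | h
        · have hm0 : m₂ = 0 := by
            have := sq_nonneg m₂; nlinarith
          simp [hm0]
        · simp [h]
      rw [← hc, zero_mul]
      linarith
    · have hm₂' : 0 < m₂ := by
        rcases hm₂.eq_or_lt with rfl | h
        · exfalso; rw [hcdef] at hc; nlinarith
        · exact h
      have hfpos : 0 < f := by nlinarith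
      have hrw : m₂ * Real.sqrt (f * g * L) = Real.sqrt (c * (g * L)) := by
        have h1 : c * (g * L) = m₂ ^ 2 * (f * g * L) := by rw [hcdef]; ring
        have h2 : Real.sqrt (m₂ ^ 2 * (f * g * L))
            = Real.sqrt (m₂ ^ 2) * Real.sqrt (f * g * L) := Real.sqrt_mul (by positivity) _
        rw [h1, h2, Real.sqrt_sq hm₂]
      rcases le_or_gt c g with hcg | hgc
      · -- case c ≤ g
        have hL' : L ≤ max (Real.log (S / c)) 0 := by
          refine logp_mono (by positivity) ?_
          gcongr
        have hAM : Real.sqrt (c * (g * L)) ≤ (c * L + g) / 2 := by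
          have h : c * (g * L) = (c * L) * g := by ring
          rw [h]
          exact sqrt_mul_le_add_div_two (by positivity) hg
        have h2 : c * L ≤ c * max (Real.log (S / c)) 0 :=
          mul_le_mul_of_nonneg_left hL' hc.le
        have h0 : 0 ≤ c * max (Real.log (S / c)) 0 :=
          mul_nonneg hc.le (logp_nonneg _)
        have hexp : c * (1 + max (Real.log (S / c)) 0)
            = c + c * max (Real.log (S / c)) 0 := by ring
        rw [hrw]
        linarith
      · -- case g < c
        have hB1 : (1:ℝ) ≤ 1 + max (Real.log (S / c)) 0 := by
          have := logp_nonneg (S / c); linarith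
        have hgL : g * L ≤ c * (1 + max (Real.log (S / c)) 0) := by
          rcases hg.eq_or_lt with rfl | hg'
          · simp only [zero_mul]; positivity
          · have hsplit : S / g = (S / c) * (c / g) := by field_simp
            have hLle : L ≤ max (Real.log (S / c)) 0 + max (Real.log (c / g)) 0 := by
              rw [hLdef, hsplit]
              exact logp_mul (by positivity) (by positivity)
            have h3 : g * max (Real.log (c / g)) 0 ≤ c := mul_logp_div_le hg' hc.le
            have h4 : g * max (Real.log (S / c)) 0 ≤ c * max (Real.log (S / c)) 0 :=
              mul_le_mul_of_nonneg_right hgc.le (logp_nonneg _)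
            have h5 := mul_le_mul_of_nonneg_left hLle hg
            have h6 : g * (max (Real.log (S / c)) 0 + max (Real.log (c / g)) 0)
                = g * max (Real.log (S / c)) 0 + g * max (Real.log (c / g)) 0 := by ring
            have hexp : c * (1 + max (Real.log (S / c)) 0)
                = c + c * max (Real.log (S / c)) 0 := by ring
            linarith
        have h5 : Real.sqrt (c * (g * L)) ≤ c * (1 + max (Real.log (S / c)) 0) := by
          calc Real.sqrt (c * (g * L))
              ≤ Real.sqrt (c * (c * (1 + max (Real.log (S / c)) 0))) := by
                apply Real.sqrt_le_sqrt
                exact mul_le_mul_of_nonneg_left hgL hc.le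
            _ = c * Real.sqrt (1 + max (Real.log (S / c)) 0) := by
                have e1 : c * (c * (1 + max (Real.log (S / c)) 0)) =
                    c ^ 2 * (1 + max (Real.log (S / c)) 0) := by ring
                have e2 : Real.sqrt (c ^ 2 * (1 + max (Real.log (S / c)) 0))
                    = Real.sqrt (c ^ 2) * Real.sqrt (1 + max (Real.log (S / c)) 0) :=
                  Real.sqrt_mul (by positivity) _
                rw [e1, e2, Real.sqrt_sq hc.le]
            _ ≤ c * (1 + max (Real.log (S / c)) 0) :=
                mul_le_mul_of_nonneg_left (sqrt_le_self_of_one_le hB1) hc.le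
        rw [hrw]; linarith
  -- Step 2
  have step2 : c * (1 + max (Real.log (S / c)) 0) ≤
      (2 * m₂ ^ 2 + S + m₂ ^ 2 * Λ) * (f + ε) := by
    rcases hc0.eq_or_lt with hc | hc
    · rw [← hc, zero_mul]
      positivity
    · have hm₂' : 0 < m₂ ^ 2 := by
        rcases (sq_nonneg m₂).eq_or_lt with h | h
        · exfalso; rw [hcdef, ← h] at hc; simp at hc
        · exact h
      have hfpos : 0 < f := by
        rcases hf.eq_or_lt with rfl | h
        · exfalso; rw [hcdef] at hc; simp at hc
        · exact h
      have hsplit : S / c = (S / m₂ ^ 2) * (1 / f) := by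
        rw [hcdef]; field_simp
      have h1 : max (Real.log (S / c)) 0 ≤
          max (Real.log (S / m₂ ^ 2)) 0 + max (Real.log (1 / f)) 0 := by
        rw [hsplit]; exact logp_mul (by positivity) (by positivity)
      have hA : c * max (Real.log (S / m₂ ^ 2)) 0 ≤ S * f := by
        have h := mul_logp_div_le hm₂' hS
        calc c * max (Real.log (S / m₂ ^ 2)) 0
            = f * (m₂ ^ 2 * max (Real.log (S / m₂ ^ 2)) 0) := by rw [hcdef]; ring
          _ ≤ f * S := mul_le_mul_of_nonneg_left h hf
          _ = S * f := by ring
      have hsplit2 : (1:ℝ) / f = (1 / (f + ε)) * ((f + ε) / f) := by field_simp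
      have h2 : max (Real.log (1 / f)) 0 ≤
          max (Real.log (1 / (f + ε))) 0 + max (Real.log ((f + ε) / f)) 0 := by
        rw [hsplit2]; exact logp_mul (by positivity) (by positivity)
      have h3 : max (Real.log (1 / (f + ε))) 0 ≤ Λ := by
        refine max_le ?_ hΛ0
        refine le_trans (Real.log_le_log (by positivity)
          (one_div_le_one_div_of_le hε (by linarith))) hΛ
      have h4 : f * max (Real.log ((f + ε) / f)) 0 ≤ f + ε :=
        mul_logp_div_le hfpos (by linarith)
      have hcF : c ≤ m₂ ^ 2 * (f + ε) := by
        rw [hcdef]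
        have : m₂ ^ 2 * f ≤ m₂ ^ 2 * (f + ε) :=
          mul_le_mul_of_nonneg_left (by linarith) (by positivity)
        linarith
      have hlog1f : c * max (Real.log (1 / f)) 0 ≤
          m₂ ^ 2 * (f + ε) * Λ + m₂ ^ 2 * (f + ε) := by
        have e1 := mul_le_mul_of_nonneg_left h2 hc.le
        have e1' : c * (max (Real.log (1 / (f + ε))) 0 + max (Real.log ((f + ε) / f)) 0)
            = c * max (Real.log (1 / (f + ε))) 0 + c * max (Real.log ((f + ε) / f)) 0 := by
          ring
        have e2 : c * max (Real.log (1 / (f + ε))) 0 ≤ c * Λ :=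
          mul_le_mul_of_nonneg_left h3 hc.le
        have e3 : c * max (Real.log ((f + ε) / f)) 0
            = m₂ ^ 2 * (f * max (Real.log ((f + ε) / f)) 0) := by rw [hcdef]; ring
        have e4 : m₂ ^ 2 * (f * max (Real.log ((f + ε) / f)) 0) ≤ m₂ ^ 2 * (f + ε) :=
          mul_le_mul_of_nonneg_left h4 (by positivity)
        have e5 : c * Λ ≤ m₂ ^ 2 * (f + ε) * Λ := mul_le_mul_of_nonneg_right hcF hΛ0
        linarith
      have hcS : c * max (Real.log (S / c)) 0 ≤
          S * f + m₂ ^ 2 * (f + ε) * Λ + m₂ ^ 2 * (f + ε) := by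
        have q := mul_le_mul_of_nonneg_left h1 hc.le
        have qq : c * (max (Real.log (S / m₂ ^ 2)) 0 + max (Real.log (1 / f)) 0)
            = c * max (Real.log (S / m₂ ^ 2)) 0 + c * max (Real.log (1 / f)) 0 := by ring
        linarith
      have hSf : S * f ≤ S * (f + ε) := mul_le_mul_of_nonneg_left (by linarith) hS
      have expand : (2 * m₂ ^ 2 + S + m₂ ^ 2 * Λ) * (f + ε)
          = m₂ ^ 2 * (f + ε) + m₂ ^ 2 * (f + ε) + S * (f + ε)
            + m₂ ^ 2 * (f + ε) * Λ := by ring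
      have hdist : c * (1 + max (Real.log (S / c)) 0)
          = c + c * max (Real.log (S / c)) 0 := by ring
      linarith
  -- combine
  have hm₁f : m₁ * f ≤ m₁ * (f + ε) := mul_le_mul_of_nonneg_left (by linarith) hm₁
  have hfinal : (m₁ + 2 * m₂ ^ 2 + S + m₂ ^ 2 * Λ) * (f + ε)
      = m₁ * (f + ε) + (2 * m₂ ^ 2 + S + m₂ ^ 2 * Λ) * (f + ε) := by ring
  linarith
/-- An integral-form Grönwall lemma, proven by an induction over intervals on which
the weight `w` has integral at most `1/4`. -/
private lemma gronwall_aux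
    {σ τ ε : ℝ} {w f' F : ℝ → ℝ}
    (hστ : σ ≤ τ) (hε : 0 < ε)
    (hw_int : IntegrableOn w (Icc σ τ))
    (hw_nn : ∀ᵐ t ∂(volume.restrict (Ioo σ τ)), 0 ≤ w t)
    (hf'_int : IntegrableOn f' (Icc σ τ))
    (hFnn : ∀ t ∈ Icc σ τ, 0 ≤ F t)
    (hF : ∀ t ∈ Icc σ τ, F t = ε + ∫ s in σ..t, f' s)
    (hFle : ∀ᵐ t ∂(volume.restrict (Ioo σ τ)), f' t ≤ w t * F t) :
    ∀ t ∈ Icc σ τ, F t ≤ ε * Real.exp (2 * (∫ s in σ..τ, w s) + 1) := by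
  -- interval integrability between points of `Icc σ τ`
  have hII : ∀ {h : ℝ → ℝ}, IntegrableOn h (Icc σ τ) → ∀ {s t : ℝ}, s ∈ Icc σ τ →
      t ∈ Icc σ τ → IntervalIntegrable h volume s t := by
    intro h hint s t hs ht
    exact (hint.mono_set (uIcc_subset_Icc hs ht)).intervalIntegrable
  -- transfer of a.e. statements to subintervals
  have aeT : ∀ {P : ℝ → Prop}, (∀ᵐ t ∂(volume.restrict (Ioo σ τ)), P t) → ∀ s t : ℝ,
      σ ≤ s → t ≤ τ → ∀ᵐ x ∂(volume.restrict (Ioc s t)), P x := by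
    intro P hP s t hs ht
    rw [← Measure.restrict_congr_set Ioo_ae_eq_Ioc]
    exact ae_restrict_of_ae_restrict_of_subset (Ioo_subset_Ioo hs ht) hP
  -- continuity of F
  have hprim : ContinuousOn (fun x => ∫ s in σ..x, f' s) (Icc σ τ) := by
    have h := intervalIntegral.continuousOn_primitive_interval (μ := volume)
      (a := σ) (b := τ) (f := f') (by rwa [uIcc_of_le hστ])
    rwa [uIcc_of_le hστ] at h
  have hFcont : ContinuousOn F (Icc σ τ) :=
    (continuousOn_const.add hprim).congr fun t ht => hF t ht
  obtain ⟨K, hK⟩ := isCompact_Icc.exists_bound_of_continuousOn hFcont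
  have hG_int : IntegrableOn (fun s => w s * F s) (Icc σ τ) := by
    have h := Integrable.bdd_mul (μ := volume.restrict (Icc σ τ)) (c := K) hw_int
      (hFcont.aestronglyMeasurable measurableSet_Icc)
      ((ae_restrict_iff' measurableSet_Icc).2 (ae_of_all _ hK))
    exact h.congr (ae_of_all _ fun x => mul_comm (F x) (w x))
  set W : ℝ → ℝ := fun t => ∫ s in σ..t, w s with hWdef
  set H : ℝ → ℝ := fun t => ε + ∫ s in σ..t, w s * F s with hHdef
  have hWσ : W σ = 0 := intervalIntegral.integral_same
  have hWcont : ContinuousOn W (Icc σ τ) := by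
    have h := intervalIntegral.continuousOn_primitive_interval (μ := volume)
      (a := σ) (b := τ) (f := w) (by rwa [uIcc_of_le hστ])
    rwa [uIcc_of_le hστ] at h
  have hHσ : H σ = ε := by simp [hHdef]
  -- nonnegativity of the integrands a.e. on subintervals
  have haeG : ∀ s t : ℝ, σ ≤ s → t ≤ τ →
      0 ≤ᵐ[volume.restrict (Ioc s t)] fun r => w r * F r := by
    intro s t hs ht
    filter_upwards [aeT hw_nn s t hs ht, ae_restrict_mem measurableSet_Ioc] with x h1 h2
    exact mul_nonneg h1 (hFnn x ⟨le_trans hs h2.1.le, le_trans h2.2 ht⟩)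
  -- increments of W and H
  have hWadd : ∀ s t : ℝ, s ∈ Icc σ τ → t ∈ Icc σ τ →
      W t = W s + ∫ r in s..t, w r := by
    intro s t hs ht
    rw [hWdef]
    simp only
    rw [← intervalIntegral.integral_add_adjacent_intervals
      (hII hw_int (left_mem_Icc.2 hστ) hs) (hII hw_int hs ht)]
  have hHadd : ∀ s t : ℝ, s ∈ Icc σ τ → t ∈ Icc σ τ →
      H t = H s + ∫ r in s..t, w r * F r := by
    intro s t hs ht
    rw [hHdef]
    simp only
    rw [add_assoc, ← intervalIntegral.integral_add_adjacent_intervals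
      (hII hG_int (left_mem_Icc.2 hστ) hs) (hII hG_int hs ht)]
  -- monotonicity of W and H
  have hWmono : ∀ s t : ℝ, s ∈ Icc σ τ → t ∈ Icc σ τ → s ≤ t → W s ≤ W t := by
    intro s t hs ht hst
    rw [hWadd s t hs ht]
    have h0 : 0 ≤ ∫ r in s..t, w r := by
      rw [intervalIntegral.integral_of_le hst]
      exact setIntegral_nonneg_of_ae_restrict (aeT hw_nn s t hs.1 ht.2)
    linarith
  have hHmono : ∀ s t : ℝ, s ∈ Icc σ τ → t ∈ Icc σ τ → s ≤ t → H s ≤ H t := by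
    intro s t hs ht hst
    rw [hHadd s t hs ht]
    have h0 : 0 ≤ ∫ r in s..t, w r * F r := by
      rw [intervalIntegral.integral_of_le hst]
      exact setIntegral_nonneg_of_ae_restrict (haeG s t hs.1 ht.2)
    linarith
  have hWnn : ∀ t ∈ Icc σ τ, 0 ≤ W t := fun t ht => by
    rw [← hWσ]; exact hWmono σ t (left_mem_Icc.2 hστ) ht ht.1
  have hHpos : ∀ t ∈ Icc σ τ, 0 < H t := fun t ht =>
    lt_of_lt_of_le hε (by rw [← hHσ]; exact hHmono σ t (left_mem_Icc.2 hστ) ht ht.1)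
  -- F ≤ H
  have hFleH : ∀ t ∈ Icc σ τ, F t ≤ H t := by
    intro t ht
    rw [hF t ht, hHdef]
    simp only
    have h : (∫ s in σ..t, f' s) ≤ ∫ s in σ..t, w s * F s := by
      apply intervalIntegral.integral_mono_ae_restrict ht.1
        (hII hf'_int (left_mem_Icc.2 hστ) ht) (hII hG_int (left_mem_Icc.2 hστ) ht)
      rw [← Measure.restrict_congr_set Ioc_ae_eq_Icc]
      exact aeT hFle σ t le_rfl ht.2
    linarith
  -- the key step inequality
  have key : ∀ s t : ℝ, s ∈ Icc σ τ → t ∈ Icc σ τ → s ≤ t →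
      H t ≤ H s + (W t - W s) * H t := by
    intro s t hs ht hst
    have h1 : (∫ r in s..t, w r * F r) ≤ ∫ r in s..t, w r * H t := by
      apply intervalIntegral.integral_mono_ae_restrict hst (hII hG_int hs ht)
        ((hII hw_int hs ht).mul_const (H t))
      rw [← Measure.restrict_congr_set Ioc_ae_eq_Icc]
      filter_upwards [aeT hw_nn s t hs.1 ht.2, ae_restrict_mem measurableSet_Ioc]
        with x hx1 hx2
      have hxI : x ∈ Icc σ τ := ⟨le_trans hs.1 hx2.1.le, le_trans hx2.2 ht.2⟩
      exact mul_le_mul_of_nonneg_left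
        (le_trans (hFleH x hxI) (hHmono x t hxI ht hx2.2)) hx1
    have h2 : (∫ r in s..t, w r * H t) = (∫ r in s..t, w r) * H t :=
      intervalIntegral.integral_mul_const _ _
    have h3 := hHadd s t hs ht
    have h4 := hWadd s t hs ht
    have : W t - W s = ∫ r in s..t, w r := by linarith
    rw [this]
    linarith [h1, h2 ▸ h1]
  -- main induction
  have ind : ∀ n : ℕ, ∀ t ∈ Icc σ τ, W t ≤ n / 4 → H t ≤ ε * (4/3) ^ n := by
    intro n
    induction n with
    | zero =>
      intro t ht hWt
      have h0 : W t = 0 := le_antisymm (by simpa using hWt) (hWnn t ht)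
      have hk := key σ t (left_mem_Icc.2 hστ) ht ht.1
      rw [hWσ, h0] at hk
      simpa [hHσ] using hk
    | succ n ih =>
      intro t ht hWt
      by_cases hcase : W t ≤ n / 4
      · have h := ih t ht hcase
        have h2 : ε * (4/3 : ℝ) ^ n ≤ ε * (4/3) ^ (n + 1) := by
          apply mul_le_mul_of_nonneg_left _ hε.le
          apply pow_le_pow_right₀ (by norm_num) (Nat.le_succ n)
        linarith
      · push_neg at hcase
        have hmem : (n / 4 : ℝ) ∈ Icc (W σ) (W t) := by
          rw [hWσ]; exact ⟨by positivity, hcase.le⟩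
        obtain ⟨s, hs, hWs⟩ := intermediate_value_Icc ht.1
          (hWcont.mono (Icc_subset_Icc le_rfl ht.2)) hmem
        have hsI : s ∈ Icc σ τ := ⟨hs.1, le_trans hs.2 ht.2⟩
        have hHs := ih s hsI (le_of_eq hWs)
        have hk := key s t hsI ht hs.2
        have hHt := hHpos t ht
        have hWs14 : W t - W s ≤ 1/4 := by
          rw [hWs]; push_cast at hWt ⊢; linarith
        have hprod : (W t - W s) * H t ≤ (1/4) * H t :=
          mul_le_mul_of_nonneg_right hWs14 hHt.le
        have h8 : H t ≤ H s + 1 / 4 * H t := le_trans hk (by linarith [hprod])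
        have h9 : H t ≤ (4/3) * H s := by linarith [h8]
        have h10 : (4/3 : ℝ) * H s ≤ (4/3) * (ε * (4/3 : ℝ) ^ n) :=
          mul_le_mul_of_nonneg_left hHs (by norm_num)
        have hfin : H t ≤ (4/3) * (ε * (4/3 : ℝ) ^ n) := le_trans h9 h10
        calc H t ≤ (4/3) * (ε * (4/3 : ℝ) ^ n) := hfin
          _ = ε * (4/3) ^ (n + 1) := by rw [pow_succ]; ring
  -- conclusion
  intro t ht
  have hτI : τ ∈ Icc σ τ := right_mem_Icc.2 hστ
  have hWτnn : 0 ≤ W τ := hWnn τ hτI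
  set n : ℕ := ⌈4 * W τ⌉₊ with hn
  have hWtn : W t ≤ n / 4 := by
    have h1 : W t ≤ W τ := hWmono t τ ht hτI ht.2
    have h2 : 4 * W τ ≤ (n : ℝ) := Nat.le_ceil _
    linarith
  have hH := ind n t ht hWtn
  have hpow : ((4:ℝ)/3) ^ n ≤ Real.exp (2 * W τ + 1) := by
    have h1 : ((4:ℝ)/3) ≤ Real.exp (1/3) := by
      have := Real.add_one_le_exp (1/3 : ℝ)
      linarith
    have h2 : ((4:ℝ)/3) ^ n ≤ (Real.exp (1/3)) ^ n :=
      pow_le_pow_left₀ (by norm_num) h1 n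
    rw [← Real.exp_nat_mul] at h2
    refine h2.trans (Real.exp_le_exp.2 ?_)
    have h3 : (n : ℝ) < 4 * W τ + 1 := Nat.ceil_lt_add_one (by positivity)
    linarith
  have := le_trans (hFleH t ht) (le_trans hH (mul_le_mul_of_nonneg_left hpow hε.le))
  exact this

/-- Grönwall-type lemma with a logarithmic correction (Li, 2016, Lemma 2.2), used to prove
uniqueness of weak solutions. Here `log⁺ x = max (log x) 0`, and by Lean's conventions
(`x / 0 = 0`, `log 0 = 0`, `√0 = 0`) the square-root term vanishes whenever `g t = 0`. -/
theorem log_gronwall (T : ℝ) (hT : 0 < T)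
    (m₁ m₂ S g f f' : ℝ → ℝ)
    (hm₁nn : ∀ t ∈ Ioo (0:ℝ) T, 0 ≤ m₁ t)
    (hm₁int : IntegrableOn m₁ (Ioo 0 T))
    (hSnn : ∀ t ∈ Ioo (0:ℝ) T, 0 ≤ S t)
    (hSint : IntegrableOn S (Ioo 0 T))
    (hSpos : ∀ᵐ t ∂(volume.restrict (Ioo (0:ℝ) T)), 0 < S t)
    (hm₂nn : ∀ t ∈ Ioo (0:ℝ) T, 0 ≤ m₂ t)
    (hm₂sq : IntegrableOn (fun t => (m₂ t) ^ 2) (Ioo 0 T))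
    (hg : Measurable g)
    (hgnn : ∀ t ∈ Ioo (0:ℝ) T, 0 ≤ g t)
    (hfnn : ∀ t ∈ Ico (0:ℝ) T, 0 ≤ f t)
    (hf'int : ∀ t ∈ Ico (0:ℝ) T, IntegrableOn f' (Icc 0 t))
    (hfabs : ∀ t ∈ Ico (0:ℝ) T, f t = f 0 + ∫ s in (0:ℝ)..t, f' s)
    (hf0 : f 0 = 0)
    (hineq : ∀ᵐ t ∂(volume.restrict (Ioo (0:ℝ) T)),
      f' t + g t ≤ m₁ t * f t +
        m₂ t * Real.sqrt (f t * g t * max (Real.log (S t / g t)) 0)) :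
    ∀ t ∈ Ico (0:ℝ) T, f t = 0 := by
  intro t ht
  rcases ht with ⟨ht0, htT⟩
  rcases eq_or_lt_of_le ht0 with rfl | htpos
  · exact hf0
  have h0t : (0:ℝ) ∈ Icc (0:ℝ) t := left_mem_Icc.2 htpos.le
  set μ2 : ℝ → ℝ := fun s => m₂ s ^ 2 with hμ2
  have hsub : Ioc (0:ℝ) t ⊆ Ioo 0 T := fun x hx => ⟨hx.1, lt_of_le_of_lt hx.2 htT⟩
  have Iμ : IntegrableOn μ2 (Icc 0 t) := by
    rw [integrableOn_Icc_iff_integrableOn_Ioc]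
    exact hm₂sq.mono_set hsub
  have Im₁ : IntegrableOn m₁ (Icc 0 t) := by
    rw [integrableOn_Icc_iff_integrableOn_Ioc]
    exact hm₁int.mono_set hsub
  have IS : IntegrableOn S (Icc 0 t) := by
    rw [integrableOn_Icc_iff_integrableOn_Ioc]
    exact hSint.mono_set hsub
  have If' : IntegrableOn f' (Icc 0 t) := hf'int t ⟨ht0, htT⟩
  have hIccsub : Icc (0:ℝ) t ⊆ Ico 0 T := fun x hx => ⟨hx.1, lt_of_le_of_lt hx.2 htT⟩
  have hII : ∀ {h : ℝ → ℝ}, IntegrableOn h (Icc 0 t) → ∀ {s r : ℝ}, s ∈ Icc 0 t →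
      r ∈ Icc 0 t → IntervalIntegrable h volume s r := by
    intro h hint s r hs hr
    exact (hint.mono_set (uIcc_subset_Icc hs hr)).intervalIntegrable
  have hfadd : ∀ s r : ℝ, s ∈ Icc 0 t → r ∈ Icc 0 t → f r = f s + ∫ u in s..r, f' u := by
    intro s r hs hr
    have h1 : f r = ∫ u in (0:ℝ)..r, f' u := by rw [hfabs r (hIccsub hr), hf0]; ring
    have h2 : f s = ∫ u in (0:ℝ)..s, f' u := by rw [hfabs s (hIccsub hs), hf0]; ring
    rw [h1, h2, ← intervalIntegral.integral_add_adjacent_intervals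
      (hII If' h0t hs) (hII If' hs hr)]
  set a : ℝ → ℝ := fun u => m₁ u + 2 * μ2 u + S u with hadef
  have Ia : IntegrableOn a (Icc 0 t) := (Im₁.add (Iμ.const_mul 2)).add IS
  -- the propagation step: on an interval where `∫ μ2 ≤ 1/8`, vanishing propagates
  have prop : ∀ σ ρ : ℝ, σ ∈ Icc 0 t → ρ ∈ Icc 0 t → σ ≤ ρ → f σ = 0 →
      (∫ u in σ..ρ, μ2 u) ≤ 1/8 → ∀ x ∈ Icc σ ρ, f x = 0 := by
    intro σ ρ hσ hρ hσρ hfσ hQ x hx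
    have hsub2 : Icc σ ρ ⊆ Icc 0 t := Icc_subset_Icc hσ.1 hρ.2
    have hxI : x ∈ Icc 0 t := hsub2 hx
    have hfx0 : 0 ≤ f x := hfnn x (hIccsub hxI)
    set A : ℝ := ∫ u in σ..ρ, a u with hAdef
    set Q : ℝ := ∫ u in σ..ρ, μ2 u with hQdef
    have key : ∀ k : ℕ, f x ≤ Real.exp (2*A + 1) * Real.exp (-(3/4 : ℝ) * k) := by
      intro k
      set ε : ℝ := Real.exp (-(k:ℝ)) with hεdef
      have hε0 : 0 < ε := Real.exp_pos _
      have hlogε : Real.log (1/ε) = (k:ℝ) := by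
        rw [hεdef, one_div, ← Real.exp_neg, neg_neg, Real.log_exp]
      set w : ℝ → ℝ := fun u => a u + μ2 u * (k:ℝ) with hwdef
      have Iw : IntegrableOn w (Icc σ ρ) :=
        (Ia.mono_set hsub2).add ((Iμ.mono_set hsub2).mul_const _)
      have hw_nn : ∀ᵐ u ∂(volume.restrict (Ioo σ ρ)), 0 ≤ w u := by
        filter_upwards [ae_restrict_mem measurableSet_Ioo] with u hu
        have huT : u ∈ Ioo 0 T :=
          ⟨lt_of_le_of_lt hσ.1 hu.1, lt_of_le_of_lt (hu.2.le.trans hρ.2) htT⟩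
        have h1 := hm₁nn u huT
        have h2 := hSnn u huT
        have h3 : (0:ℝ) ≤ μ2 u := sq_nonneg _
        have h4 : (0:ℝ) ≤ μ2 u * (k:ℝ) := mul_nonneg h3 (Nat.cast_nonneg k)
        simp only [hwdef, hadef]
        linarith
      have hFnn : ∀ u ∈ Icc σ ρ, 0 ≤ f u + ε := by
        intro u hu
        have := hfnn u (hIccsub (hsub2 hu))
        linarith
      have hFeq : ∀ u ∈ Icc σ ρ, f u + ε = ε + ∫ s in σ..u, f' s := by
        intro u hu
        rw [hfadd σ u (hsub2 (left_mem_Icc.2 hσρ)) (hsub2 hu), hfσ]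
        ring
      have hFle : ∀ᵐ u ∂(volume.restrict (Ioo σ ρ)), f' u ≤ w u * (f u + ε) := by
        have hsubT : Ioo σ ρ ⊆ Ioo 0 T := fun u hu =>
          ⟨lt_of_le_of_lt hσ.1 hu.1, lt_of_le_of_lt (hu.2.le.trans hρ.2) htT⟩
        filter_upwards [ae_restrict_of_ae_restrict_of_subset hsubT hineq,
          ae_restrict_mem measurableSet_Ioo] with u hu1 hu2
        have huT : u ∈ Ioo 0 T := hsubT hu2
        have hfu : 0 ≤ f u := hfnn u ⟨huT.1.le, huT.2⟩
        have hb := pointwise_bound hfu (hgnn u huT) (hSnn u huT) (hm₁nn u huT)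
          (hm₂nn u huT) hε0 (le_of_eq hlogε) (Nat.cast_nonneg k) hu1
        calc f' u ≤ (m₁ u + 2 * m₂ u ^ 2 + S u + m₂ u ^ 2 * (k:ℝ)) * (f u + ε) := hb
          _ = w u * (f u + ε) := by simp only [hwdef, hadef, hμ2]
      have hmain := gronwall_aux hσρ hε0 Iw hw_nn (If'.mono_set hsub2) hFnn hFeq hFle
      have hx' := hmain x hx
      have hWint : (∫ u in σ..ρ, w u) = A + Q * (k:ℝ) := by
        have h1 : IntervalIntegrable a volume σ ρ := hII Ia (hsub2 (left_mem_Icc.2 hσρ)) (hsub2 (right_mem_Icc.2 hσρ))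
        have h2 : IntervalIntegrable μ2 volume σ ρ := hII Iμ (hsub2 (left_mem_Icc.2 hσρ)) (hsub2 (right_mem_Icc.2 hσρ))
        simp only [hwdef]
        rw [intervalIntegral.integral_add h1 (h2.mul_const _),
          intervalIntegral.integral_mul_const]
      rw [hWint] at hx'
      have e1 : ε * Real.exp (2 * (A + Q * (k:ℝ)) + 1)
          = Real.exp (2*A + 1) * Real.exp (-(k:ℝ) + 2 * Q * (k:ℝ)) := by
        rw [hεdef, ← Real.exp_add, ← Real.exp_add]
        congr 1
        ring
      have e2 : Real.exp (-(k:ℝ) + 2 * Q * (k:ℝ)) ≤ Real.exp (-(3/4 : ℝ) * k) := by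
        apply Real.exp_le_exp.2
        have hk0 : (0:ℝ) ≤ (k:ℝ) := Nat.cast_nonneg k
        nlinarith [mul_le_mul_of_nonneg_right hQ hk0]
      have e3 : Real.exp (2*A + 1) * Real.exp (-(k:ℝ) + 2 * Q * (k:ℝ))
          ≤ Real.exp (2*A + 1) * Real.exp (-(3/4 : ℝ) * k) :=
        mul_le_mul_of_nonneg_left e2 (Real.exp_pos _).le
      have : f x + ε ≤ Real.exp (2*A + 1) * Real.exp (-(3/4 : ℝ) * k) := by
        rw [e1] at hx'
        linarith
      linarith
    -- let k → ∞
    have hlim : Filter.Tendsto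
        (fun k : ℕ => Real.exp (2*A + 1) * Real.exp (-(3/4 : ℝ) * k))
        Filter.atTop (nhds 0) := by
      have hrw : (fun k : ℕ => Real.exp (2*A + 1) * Real.exp (-(3/4 : ℝ) * k))
          = fun k : ℕ => Real.exp (2*A + 1) * (Real.exp (-(3/4 : ℝ)))^k := by
        funext k
        rw [← Real.exp_nat_mul]
        congr 2
        ring
      rw [hrw]
      have h1 : Filter.Tendsto (fun k : ℕ => (Real.exp (-(3/4 : ℝ)))^k)
          Filter.atTop (nhds 0) :=
        tendsto_pow_atTop_nhds_zero_of_lt_one (Real.exp_pos _).le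
          (Real.exp_lt_one_iff.2 (by norm_num))
      have := h1.const_mul (Real.exp (2*A + 1))
      simpa using this
    have hle0 : f x ≤ 0 := ge_of_tendsto' hlim key
    exact le_antisymm hle0 hfx0
  -- outer induction on the mass of μ2
  set M : ℝ → ℝ := fun r => ∫ u in (0:ℝ)..r, μ2 u with hMdef
  have hMcont : ContinuousOn M (Icc 0 t) := by
    have h := intervalIntegral.continuousOn_primitive_interval (μ := volume)
      (a := (0:ℝ)) (b := t) (f := μ2) (by rwa [uIcc_of_le htpos.le])
    rwa [uIcc_of_le htpos.le] at h
  have hM0 : M 0 = 0 := intervalIntegral.integral_same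
  have hMadd : ∀ s r : ℝ, s ∈ Icc 0 t → r ∈ Icc 0 t →
      M r = M s + ∫ u in s..r, μ2 u := by
    intro s r hs hr
    simp only [hMdef]
    rw [← intervalIntegral.integral_add_adjacent_intervals (hII Iμ h0t hs) (hII Iμ hs hr)]
  have claim : ∀ n : ℕ, ∀ r ∈ Icc 0 t, M r ≤ n/8 → f r = 0 := by
    intro n
    induction n with
    | zero =>
      intro r hr hMr
      refine prop 0 r h0t hr hr.1 hf0 ?_ r (right_mem_Icc.2 hr.1)
      have : M r ≤ 0 := by simpa using hMr
      exact le_trans this (by norm_num)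
    | succ n ih =>
      intro r hr hMr
      by_cases hc : M r ≤ n/8
      · exact ih r hr hc
      · push_neg at hc
        have hmem : ((n:ℝ)/8) ∈ Icc (M 0) (M r) := ⟨by rw [hM0]; positivity, hc.le⟩
        obtain ⟨s, hs, hMs⟩ := intermediate_value_Icc hr.1
          (hMcont.mono (Icc_subset_Icc le_rfl hr.2)) hmem
        have hsI : s ∈ Icc 0 t := ⟨hs.1, hs.2.trans hr.2⟩
        have hfs : f s = 0 := ih s hsI (le_of_eq hMs)
        refine prop s r hsI hr hs.2 hfs ?_ r (right_mem_Icc.2 hs.2)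
        have hadd := hMadd s r hsI hr
        have : (∫ u in s..r, μ2 u) = M r - M s := by linarith
        rw [this, hMs]
        push_cast at hMr
        linarith
  refine claim ⌈8 * M t⌉₊ t (right_mem_Icc.2 htpos.le) ?_
  have := Nat.le_ceil (8 * M t)
  linarith
end

section
/- For every δ ∈ (0,1) and every r ∈ ℝ, one has f^δ(r) ≤ r · f^δ(r) + 1. -/
/-- The regularised derivative `f^δ` of the logarithmic potential. -/
noncomputable def fdelta (δ r : ℝ) : ℝ :=
  if 1 - δ ≤ r then
    Real.log ((2 - δ) / δ) - (1 - r) / δ + (1 + r) / (2 - δ)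
  else if r ≤ -(1 - δ) then
    -Real.log ((2 - δ) / δ) + (1 + r) / δ - (1 - r) / (2 - δ)
  else
    Real.log ((1 + r) / (1 - r))

lemma log_le_div_e (x : ℝ) (hx : 0 < x) : Real.log x ≤ x / Real.exp 1 := by
  have hE : (0:ℝ) < Real.exp 1 := Real.exp_pos 1
  have h := Real.log_le_sub_one_of_pos (show 0 < x / Real.exp 1 by positivity)
  rw [Real.log_div (ne_of_gt hx) (ne_of_gt hE), Real.log_exp] at h
  linarith

set_option maxHeartbeats 1000000 in
/-- For every `δ ∈ (0,1)` and every `r ∈ ℝ`, `f^δ(r) ≤ r · f^δ(r) + 1`. -/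
theorem fdelta_le (δ : ℝ) (hδ : δ ∈ Set.Ioo (0:ℝ) 1) (r : ℝ) :
    fdelta δ r ≤ r * fdelta δ r + 1 := by
  obtain ⟨hδ0, hδ1⟩ := hδ
  have h2δ : (0:ℝ) < 2 - δ := by linarith
  have hE : (0:ℝ) < Real.exp 1 := Real.exp_pos 1
  have hE27 : (2.7:ℝ) ≤ Real.exp 1 := by
    have := Real.exp_one_gt_d9; linarith
  unfold fdelta
  split_ifs with h1 h2
  · -- right case : 1 - δ ≤ r
    set L := Real.log ((2 - δ) / δ) with hLdef
    have hL0 : 0 ≤ L := Real.log_nonneg (by rw [le_div_iff₀ hδ0]; linarith)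
    have hLe : L * (δ * Real.exp 1) ≤ 2 - δ := by
      have h := log_le_div_e ((2 - δ) / δ) (by positivity)
      rw [div_div, le_div_iff₀ (by positivity)] at h
      exact h
    -- reduce to (1-r) * f ≤ 1
    set a : ℝ := (1 - r) / δ with hadef
    set b : ℝ := (1 + r) / (2 - δ) with hbdef
    have ha : a * δ = 1 - r := div_mul_cancel₀ _ (ne_of_gt hδ0)
    have hb : b * (2 - δ) = 1 + r := div_mul_cancel₀ _ (ne_of_gt h2δ)
    have ha1 : a ≤ 1 := by rw [hadef, div_le_one hδ0]; linarith
    have key : (1 - r) * (L - a + b) ≤ 1 := by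
      rcases le_or_gt (1 - r) 0 with hs | hs
      · have hb0 : 0 ≤ b := by
          rw [hbdef]; apply div_nonneg _ (le_of_lt h2δ); linarith
        have haneg : a ≤ 0 := by
          rw [hadef]; exact div_nonpos_of_nonpos_of_nonneg hs (le_of_lt hδ0)
        nlinarith
      · have ha0 : 0 < a := by rw [hadef]; positivity
        set E := Real.exp 1 with hEdef
        have hr : r = 1 - a * δ := by linarith
        have hb2 : b * (2 - δ) = 2 - a * δ := by rw [hb]; linarith
        have s1 : a * δ * L * E ≤ a * (2 - δ) := by
          nlinarith [mul_le_mul_of_nonneg_left hLe (le_of_lt ha0)]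
        have s1' : a * δ * L * E * (2 - δ) ≤ a * (2 - δ) ^ 2 := by
          nlinarith [mul_le_mul_of_nonneg_right s1 (le_of_lt h2δ)]
        have s2 : a * δ * b * (2 - δ) = a * δ * (2 - a * δ) := by
          nlinarith [hb2]
        have s2E : a * δ * b * (2 - δ) * E = a * δ * (2 - a * δ) * E := by
          rw [s2]
        have hq : (0:ℝ) ≤ 54 * a ^ 2 - 74 * a + 27 := by
          nlinarith [sq_nonneg (54 * a - 37)]
        have hq2 : (0:ℝ) ≤ 1 - 2 * a + 2 * a ^ 2 := by nlinarith
        have t1 : 0 ≤ E - 2 * a - 2 * E * a * (1 - a) := by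
          nlinarith [mul_nonneg (by linarith : (0:ℝ) ≤ E - 2.7) hq2]
        have step : 0 ≤ (2 - δ) * E - a * (2 - δ) ^ 2 - 2 * E * δ * a * (1 - a) := by
          nlinarith [mul_nonneg t1 (le_of_lt h2δ),
            mul_nonneg (mul_nonneg (mul_nonneg (le_of_lt hE) (le_of_lt ha0))
              (by linarith : (0:ℝ) ≤ 1 - a)) (by linarith : (0:ℝ) ≤ 2 - 2 * δ),
            mul_nonneg (mul_nonneg (le_of_lt hE) (le_of_lt ha0)) (by linarith : (0:ℝ) ≤ 1 - a),
            mul_nonneg (mul_nonneg (le_of_lt ha0) (le_of_lt hδ0)) (le_of_lt h2δ)]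
        -- goal * (2-δ) * E
        have hg : (1 - r) * (L - a + b) * ((2 - δ) * E) ≤ 1 * ((2 - δ) * E) := by
          rw [hr]
          nlinarith [step, s1', s2E]
        exact le_of_mul_le_mul_right hg (by positivity)
    nlinarith [key]
  · -- left case : r ≤ -(1-δ)
    have ht : (1 + r) / δ ≤ 1 := by
      rw [div_le_one hδ0]; linarith
    have hL0 : 0 ≤ Real.log ((2 - δ) / δ) :=
      Real.log_nonneg (by rw [le_div_iff₀ hδ0]; linarith)
    have hq : (1:ℝ) ≤ (1 - r) / (2 - δ) := by
      rw [le_div_iff₀ h2δ]; linarith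
    have hf : -Real.log ((2 - δ) / δ) + (1 + r) / δ - (1 - r) / (2 - δ) ≤ 0 := by
      linarith
    have hr1 : 0 < 1 - r := by linarith
    nlinarith [mul_nonneg (le_of_lt hr1) (neg_nonneg.mpr hf)]
  · -- middle case
    push_neg at h1 h2
    have hr1 : 0 < 1 - r := by linarith
    have hr2 : 0 < 1 + r := by linarith
    set L := Real.log ((1 + r) / (1 - r)) with hLdef
    have key : (1 - r) * L ≤ 1 := by
      rcases le_or_gt r 0 with hr | hr
      · have hL : L ≤ 0 := Real.log_nonpos (by positivity)
          (by rw [div_le_one hr1]; linarith)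
        nlinarith
      · have h := log_le_div_e ((1 + r) / (1 - r)) (by positivity)
        rw [div_div, le_div_iff₀ (by positivity)] at h
        -- h : L * ((1-r) * exp 1) ≤ 1 + r
        nlinarith [h]
    nlinarith [key]
end
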